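/- Wang–Ma's terminating expansion formula (the y = q^N case of equation (wang-ma1)): for a nonnegative integer N, complex parameters q, a, b, an arbitrary sequence (β_j), and any function K defined on powers of q, provided no denominator vanishes, K(q^N) · Σ_{j=0}^{N} [(1 - b q^{2j}) (q^{-N}; q)_j / ((1-b)(b q^{N+1}; q)_j)] q^{Nj} β_j = Σ_{k=0}^{N} [(1 - a q^{2k}) (q^{-N}; q)_k / ((1-a)(q; q)_k (a q^{N+1}; q)_k)] q^{Nk} (a; q)_k / 1 · Σ_{j=0}^{k} [(q^{-k}; q)_j (a q^k; q)_j (bq; q)_j / (b; q)_{2j}] (-1)^j q^{j(j+1)/2} β_j · Σ_{m=0}^{k-j} [(q^{-k+j}; q)_m (a q^{j+k}; q)_m (b q^{j+1}; q)_m / ((q; q)_m (b q^{1+2j}; q)_m (aq; q)_{j+m})] q^m K(q^{j+m}). -/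

import Mathlib

open Finset

/-- The finite q-shifted factorial `(a; q)_n`. -/
noncomputable def qp (q a : ℂ) (n : ℕ) : ℂ := ∏ i ∈ Finset.range n, (1 - a * q ^ i)

/-!
Put `k = j + m + s`. Up to a factor depending only on `(j, m)`, the `(k, j, m)` summand of the
right-hand side is the `s`-th term of the very-well-poised sum
`∑ₛ (1 - A q^{2s}) (A)ₛ (B)ₛ / ((q)ₛ (Aq/B)ₛ Bˢ)` with `A = a q^{2(j+m)}` and
`B = q^{-(N-j-m)}`. This sum telescopes: its partial sum up to `n` is
`(1 - A) (Aq)ₙ (Bq)ₙ / ((q)ₙ (Aq/B)ₙ Bⁿ)`, and `(Bq)ₙ = 0` when `B = q^{-n}`, `n ≥ 1`.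
So only the terms with `j + m = N` survive, and there the product of the `a`-factorials
collapses to `(a; q)_{2N+1} = (1 - a) (aq; q)_N (aq^{N+1}; q)_N`, leaving the `j`-th term of
the left-hand side.
-/

section QPochhammer

variable (q x : ℂ)

@[simp]
lemma qp_zero : qp q x 0 = 1 := prod_range_zero _

lemma qp_succ (n : ℕ) : qp q x (n + 1) = qp q x n * (1 - x * q ^ n) :=
  prod_range_succ _ _

lemma qp_add (m n : ℕ) : qp q x (m + n) = qp q x m * qp q (x * q ^ m) n := by
  simp only [qp, prod_range_add, pow_add, mul_assoc]

lemma qp_succ' (n : ℕ) : qp q x (n + 1) = (1 - x) * qp q (x * q) n := by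
  rw [add_comm, qp_add]
  simp [qp]

lemma qp_ne_zero_of_succ {n : ℕ} (h : qp q x (n + 1) ≠ 0) :
    qp q x n ≠ 0 ∧ 1 - x * q ^ n ≠ 0 :=
  mul_ne_zero_iff.mp (qp_succ q x n ▸ h)

lemma qp_mul_one_sub_mul_qp (j m : ℕ) :
    qp q x (2 * j) * (1 - x * q ^ (2 * j)) * qp q (x * q ^ (1 + 2 * j)) m
      = (1 - x) * qp q (x * q) (j + m) * qp q (x * q ^ (j + m + 1)) j := by
  rw [← qp_succ, add_comm 1, ← qp_add, show 2 * j + 1 + m = j + m + j + 1 by omega, qp_succ',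
    qp_add, mul_assoc x, ← pow_succ', mul_assoc]

variable {q}

lemma qp_inv_pow_mul (hq : q ≠ 0) (i s : ℕ) :
    qp q (q ^ (i + s))⁻¹ i * (-1) ^ i * q ^ (i * s + i * (i + 1) / 2) * qp q q s
      = qp q q (i + s) := by
  induction i with
  | zero => simp
  | succ i ih =>
    have hexp : (i + 1) * s + (i + 1) * (i + 1 + 1) / 2
        = i * s + i * (i + 1) / 2 + (i + s + 1) := by
      rw [show (i + 1) * (i + 1 + 1) = i * (i + 1) + (i + 1) * 2 by ring,
        Nat.add_mul_div_right _ _ two_pos]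
      ring
    rw [qp_succ', show (q ^ (i + 1 + s))⁻¹ * q = (q ^ (i + s))⁻¹ by field_simp; ring, hexp,
      show i + 1 + s = i + s + 1 by ring, qp_succ, ← ih]
    field_simp
    ring

lemma qp_inv_pow_eq_div (hq : q ≠ 0) {s : ℕ} (hs : qp q q s ≠ 0) (i : ℕ) :
    qp q (q ^ (i + s))⁻¹ i
      = (-1) ^ i * qp q q (i + s) / (q ^ (i * s + i * (i + 1) / 2) * qp q q s) := by
  rw [eq_div_iff (mul_ne_zero (pow_ne_zero _ hq) hs), ← qp_inv_pow_mul hq]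
  linear_combination (-qp q (q ^ (i + s))⁻¹ i * q ^ (i * s + i * (i + 1) / 2) * qp q q s) *
    pow_mul_pow_eq_one i (by norm_num : (-1 : ℂ) * -1 = 1)

lemma qp_inv_pow_mul_self (hq : q ≠ 0) {n : ℕ} (hn : n ≠ 0) : qp q ((q ^ n)⁻¹ * q) n = 0 := by
  obtain ⟨n, rfl⟩ := Nat.exists_eq_succ_of_ne_zero hn
  rw [qp_succ, mul_assoc, ← pow_succ', inv_mul_cancel₀ (pow_ne_zero _ hq), sub_self, mul_zero]

end QPochhammer

noncomputable def vwpTerm (q A B : ℂ) (s : ℕ) : ℂ :=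
  (1 - A * q ^ (2 * s)) * qp q A s * qp q B s / (qp q q s * qp q (A * q / B) s * B ^ s)

section VeryWellPoised

variable {q A B : ℂ}

lemma sum_range_vwpTerm (hB : B ≠ 0) {m : ℕ} (hq : qp q q m ≠ 0) (hA : qp q (A * q / B) m ≠ 0) :
    ∑ s ∈ range (m + 1), vwpTerm q A B s
      = (1 - A) * qp q (A * q) m * qp q (B * q) m / (qp q q m * qp q (A * q / B) m * B ^ m) := by
  induction m with
  | zero => simp [vwpTerm]
  | succ m ih =>
    obtain ⟨hq, hq'⟩ := qp_ne_zero_of_succ q q hq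
    obtain ⟨hA, hA'⟩ := qp_ne_zero_of_succ q _ hA
    have hA'' : B - A * q * q ^ m ≠ 0 := by
      rw [div_mul_eq_mul_div, one_sub_div hB] at hA'
      exact (div_ne_zero_iff.mp hA').1
    rw [sum_range_succ, ih hq hA, vwpTerm, qp_succ' q A, qp_succ' q B]
    simp only [qp_succ]
    field_simp
    ring

lemma sum_vwpTerm_inv_pow_eq_zero (hq : q ≠ 0) {n : ℕ} (hn : n ≠ 0) (hqn : qp q q n ≠ 0)
    (hA : qp q (A * q ^ (n + 1)) n ≠ 0) :
    ∑ s ∈ range (n + 1), vwpTerm q A (q ^ n)⁻¹ s = 0 := by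
  have hAB : A * q / (q ^ n)⁻¹ = A * q ^ (n + 1) := by rw [div_inv_eq_mul, pow_succ']; ring
  rw [sum_range_vwpTerm (inv_ne_zero (pow_ne_zero _ hq)) hqn (hAB ▸ hA),
    qp_inv_pow_mul_self hq hn, mul_zero, zero_div]

end VeryWellPoised

noncomputable def orthKernel (q a : ℂ) (N k i : ℕ) : ℂ :=
  (1 - a * q ^ (2 * k)) * qp q a (k + i) * qp q (q ^ N)⁻¹ k * qp q (q ^ k)⁻¹ i * q ^ (N * k)
    / (qp q q k * qp q (a * q ^ (N + 1)) k)

section Orthogonality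

variable {q : ℂ} (a : ℂ)

lemma orthKernel_add_eq_mul_vwpTerm (hq : q ≠ 0) (hqq : ∀ k, qp q q k ≠ 0) {i n s : ℕ}
    (ha : qp q (a * q ^ (i + n + 1)) (i + s) ≠ 0) :
    orthKernel q a (i + n) (i + s) i
      = (-1) ^ i * qp q a (2 * i) * qp q (q ^ (i + n))⁻¹ i * q ^ ((i + n) * i)
          / (q ^ (i * (i + 1) / 2) * qp q (a * q ^ (i + n + 1)) i)
        * vwpTerm q (a * q ^ (2 * i)) (q ^ n)⁻¹ s := by
  rw [qp_add] at ha
  have hA : a * q ^ (2 * i) * q / (q ^ n)⁻¹ = a * q ^ (i + n + 1) * q ^ i := by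
    rw [div_inv_eq_mul]; ring
  have hB : (q ^ (i + n))⁻¹ * q ^ i = (q ^ n)⁻¹ := by
    rw [pow_add]; field_simp
  rw [orthKernel, vwpTerm, hA, show i + s + i = 2 * i + s by ring, qp_add q a, qp_add q _ i s,
    qp_add q (a * _) i s, hB, qp_inv_pow_eq_div hq (hqq s), inv_pow]
  field_simp [hqq s, hqq (i + s), left_ne_zero_of_mul ha, right_ne_zero_of_mul ha]
  ring

lemma sum_orthKernel_eq_zero (hq : q ≠ 0) (hqq : ∀ k, qp q q k ≠ 0) {N i : ℕ}
    (ha : ∀ k, qp q (a * q ^ (N + 1)) k ≠ 0) (hi : i < N) :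
    ∑ s ∈ range (N - i + 1), orthKernel q a N (i + s) i = 0 := by
  obtain ⟨n, rfl⟩ := Nat.exists_eq_add_of_le hi.le
  have hA : qp q (a * q ^ (2 * i) * q ^ (n + 1)) n ≠ 0 := by
    have := ha (i + n)
    rw [qp_add] at this
    rw [show a * q ^ (2 * i) * q ^ (n + 1) = a * q ^ (i + n + 1) * q ^ i by ring]
    exact right_ne_zero_of_mul this
  rw [Nat.add_sub_cancel_left, sum_congr rfl fun s _ ↦ orthKernel_add_eq_mul_vwpTerm a hq hqq (ha _),
    ← mul_sum, sum_vwpTerm_inv_pow_eq_zero hq (by omega) (hqq n) hA, mul_zero]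

lemma orthKernel_self (hq : q ≠ 0) {i : ℕ} (hqi : qp q q i ≠ 0)
    (ha : qp q (a * q ^ (i + 1)) i ≠ 0) :
    orthKernel q a i i i = (1 - a) * qp q (a * q) i * qp q q i / q ^ i := by
  have hA : (1 - a * q ^ (2 * i)) * qp q a (i + i)
      = (1 - a) * qp q (a * q) i * qp q (a * q ^ (i + 1)) i := by
    simpa [← two_mul, mul_comm] using qp_mul_one_sub_mul_qp q a i 0
  have hQ : qp q (q ^ i)⁻¹ i = (-1) ^ i * qp q q i / q ^ (i * (i + 1) / 2) := by
    simpa using qp_inv_pow_eq_div hq (s := 0) (by simp) i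
  have hT : q ^ (i * i) * q ^ i = (q ^ (i * (i + 1) / 2)) ^ 2 := by
    rw [← pow_add, ← pow_mul, mul_comm _ 2, Nat.two_mul_div_two_of_even (Nat.even_mul_succ_self i)]
    ring
  rw [orthKernel, hA, hQ]
  field_simp
  rw [← pow_mul, Even.neg_one_pow ⟨i, by ring⟩, mul_one, mul_assoc, hT]

end Orthogonality

noncomputable def wangMaTerm (q a b : ℂ) (β K : ℕ → ℂ) (N k j m : ℕ) : ℂ :=
  ((1 - a * q ^ (2 * k)) * qp q ((q ^ N)⁻¹) k * qp q a k
      / ((1 - a) * qp q q k * qp q (a * q ^ (N + 1)) k)) * q ^ (N * k) *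
    ((qp q ((q ^ k)⁻¹) j * qp q (a * q ^ k) j * qp q (b * q) j / qp q b (2 * j)) *
      (-1 : ℂ) ^ j * q ^ (j * (j + 1) / 2) * β j *
      ((qp q (q ^ j * (q ^ k)⁻¹) m * qp q (a * q ^ (j + k)) m * qp q (b * q ^ (j + 1)) m
          / (qp q q m * qp q (b * q ^ (1 + 2 * j)) m * qp q (a * q) (j + m))) *
        q ^ m * K (j + m)))

section WangMa

variable {q a b : ℂ} (β K : ℕ → ℂ)

lemma wangMaTerm_eq_orthKernel_mul (N k j m : ℕ) :
    wangMaTerm q a b β K N k j m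
      = orthKernel q a N k (j + m)
        * ((-1) ^ j * qp q (b * q) (j + m) * q ^ (j * (j + 1) / 2 + m) * β j * K (j + m)
          / ((1 - a) * qp q b (2 * j) * qp q q m * qp q (b * q ^ (1 + 2 * j)) m
            * qp q (a * q) (j + m))) := by
  rw [orthKernel, ← add_assoc, qp_add q a (k + j), qp_add q a k, qp_add q _ j m, qp_add q (b * q),
    mul_assoc b, ← pow_succ', mul_comm _ (q ^ j), add_comm k j, wangMaTerm]
  simp only [div_eq_mul_inv, mul_inv]
  ring

lemma wangMaTerm_self (hq : q ≠ 0) (h1 : 1 - a ≠ 0) (h2 : 1 - b ≠ 0) (hqq : ∀ k, qp q q k ≠ 0)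
    {N j m : ℕ} (hjm : j + m = N)
    (ha : qp q (a * q ^ (N + 1)) N ≠ 0) (ha' : qp q (a * q) N ≠ 0)
    (hb : qp q (b * q ^ (N + 1)) j ≠ 0) (hb' : qp q b (2 * j) ≠ 0)
    (hb'' : qp q (b * q ^ (1 + 2 * j)) m ≠ 0) :
    wangMaTerm q a b β K N N j m
      = ((1 - b * q ^ (2 * j)) * qp q ((q ^ N)⁻¹) j / ((1 - b) * qp q (b * q ^ (N + 1)) j))
        * q ^ (N * j) * β j * K N := by
  subst hjm
  have hB : 1 - b * q ^ (2 * j) = (1 - b) * qp q (b * q) (j + m) * qp q (b * q ^ (j + m + 1)) j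
      / (qp q b (2 * j) * qp q (b * q ^ (1 + 2 * j)) m) := by
    rw [eq_div_iff (mul_ne_zero hb' hb''), ← qp_mul_one_sub_mul_qp]
    ring
  have hT : q ^ ((j + m) * j) * q ^ (j + m)
      = q ^ (j * (j + 1) / 2) * q ^ (j * (j + 1) / 2) * q ^ (j * m) * q ^ m := by
    rw [← pow_add, ← pow_add, ← pow_add, ← pow_add, ← two_mul,
      Nat.two_mul_div_two_of_even (Nat.even_mul_succ_self j)]
    ring
  rw [wangMaTerm_eq_orthKernel_mul, orthKernel_self a hq (hqq _) ha, hB, qp_inv_pow_eq_div hq (hqq m)]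
  field_simp [hqq m]
  linear_combination -qp q q (j + m) * qp q (q * b) (j + m) * β j * K (j + m) * hT

lemma sum_sum_wangMaTerm (hq : q ≠ 0) (h1 : 1 - a ≠ 0) (h2 : 1 - b ≠ 0) (hqq : ∀ k, qp q q k ≠ 0)
    {N j : ℕ} (hj : j ≤ N) (ha : ∀ k, qp q (a * q ^ (N + 1)) k ≠ 0) (ha' : qp q (a * q) N ≠ 0)
    (hb : qp q (b * q ^ (N + 1)) j ≠ 0) (hb' : qp q b (2 * j) ≠ 0)
    (hb'' : qp q (b * q ^ (1 + 2 * j)) (N - j) ≠ 0) :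
    ∑ m ∈ range (N - j + 1), ∑ s ∈ range (N - j - m + 1), wangMaTerm q a b β K N (j + m + s) j m
      = ((1 - b * q ^ (2 * j)) * qp q ((q ^ N)⁻¹) j / ((1 - b) * qp q (b * q ^ (N + 1)) j))
        * q ^ (N * j) * β j * K N := by
  rw [sum_range_succ, sum_eq_zero fun m hm ↦ ?_, zero_add, Nat.sub_self, sum_range_one,
    add_zero, Nat.add_sub_cancel' hj]
  · exact wangMaTerm_self β K hq h1 h2 hqq (Nat.add_sub_cancel' hj) (ha N) ha' hb hb' hb''
  · simp only [wangMaTerm_eq_orthKernel_mul, ← sum_mul, Nat.sub_sub]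
    rw [sum_orthKernel_eq_zero a hq hqq ha (by have := mem_range.mp hm; omega), zero_mul]

end WangMa

section Reindex

variable {M : Type*} [AddCommMonoid M]

lemma sum_range_triangle (N : ℕ) (g : ℕ → ℕ → M) :
    ∑ k ∈ range (N + 1), ∑ j ∈ range (k + 1), g k j
      = ∑ j ∈ range (N + 1), ∑ t ∈ range (N - j + 1), g (j + t) j := by
  refine (sum_congr rfl fun k _ ↦ sum_congr rfl fun j hj ↦ ?_).trans
    ((sum_range_diag_flip (N + 1) fun j t ↦ g (j + t) j).trans (sum_congr rfl fun j hj ↦ ?_))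
  · rw [Nat.add_sub_cancel' (Nat.lt_succ_iff.mp (mem_range.mp hj))]
  · rw [Nat.sub_add_comm (Nat.lt_succ_iff.mp (mem_range.mp hj))]

lemma sum_range_tetrahedron (N : ℕ) (f : ℕ → ℕ → ℕ → M) :
    ∑ k ∈ range (N + 1), ∑ j ∈ range (k + 1), ∑ m ∈ range (k - j + 1), f k j m
      = ∑ j ∈ range (N + 1), ∑ m ∈ range (N - j + 1), ∑ s ∈ range (N - j - m + 1),
          f (j + m + s) j m := by
  rw [sum_range_triangle]
  refine sum_congr rfl fun j _ ↦ ?_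
  simp only [Nat.add_sub_cancel_left, add_assoc]
  exact sum_range_triangle (N - j) fun t m ↦ f (j + t) j m

end Reindex

/-- `K m` stands for `K(q^m)`. -/
theorem stmt_6_general (q a b : ℂ) (hq0 : q ≠ 0)
    (N : ℕ) (β : ℕ → ℂ) (K : ℕ → ℂ)
    (h1 : (1 : ℂ) - a ≠ 0) (h2 : (1 : ℂ) - b ≠ 0)
    (h3 : ∀ k : ℕ, qp q q k ≠ 0)
    (h4 : ∀ k : ℕ, qp q (a * q ^ (N + 1)) k ≠ 0)
    (h5 : ∀ j : ℕ, qp q (b * q ^ (N + 1)) j ≠ 0)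
    (h6 : ∀ j : ℕ, qp q b (2 * j) ≠ 0)
    (h7 : ∀ j k : ℕ, qp q (b * q ^ (1 + 2 * j)) k ≠ 0)
    (h8 : ∀ k : ℕ, qp q (a * q) k ≠ 0) :
    K N * ∑ j ∈ range (N + 1),
        ((1 - b * q ^ (2 * j)) * qp q ((q ^ N)⁻¹) j
            / ((1 - b) * qp q (b * q ^ (N + 1)) j)) * q ^ (N * j) * β j
    = ∑ k ∈ range (N + 1),
        ((1 - a * q ^ (2 * k)) * qp q ((q ^ N)⁻¹) k * qp q a k
            / ((1 - a) * qp q q k * qp q (a * q ^ (N + 1)) k)) * q ^ (N * k) *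
        ∑ j ∈ range (k + 1),
          (qp q ((q ^ k)⁻¹) j * qp q (a * q ^ k) j * qp q (b * q) j
              / qp q b (2 * j)) *
          (-1 : ℂ) ^ j * q ^ (j * (j + 1) / 2) * β j *
          ∑ m ∈ range (k - j + 1),
            (qp q (q ^ j * (q ^ k)⁻¹) m * qp q (a * q ^ (j + k)) m
                * qp q (b * q ^ (j + 1)) m
              / (qp q q m * qp q (b * q ^ (1 + 2 * j)) m * qp q (a * q) (j + m))) *
            q ^ m * K (j + m) := by
  simp only [mul_sum]
  change _ = ∑ k ∈ range (N + 1), ∑ j ∈ range (k + 1), ∑ m ∈ range (k - j + 1),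
    wangMaTerm q a b β K N k j m
  rw [sum_range_tetrahedron]
  refine sum_congr rfl fun j hj ↦ ?_
  rw [sum_sum_wangMaTerm β K hq0 h1 h2 h3 (Nat.lt_succ_iff.mp (mem_range.mp hj)) h4 (h8 N) (h5 j)
    (h6 j) (h7 j _), mul_comm]

/-- Wang–Ma's terminating expansion formula (the `y = q^N` case of (wang-ma1)).
`K m` denotes the value `K(q^m)`. -/
theorem stmt_6 (q a b : ℂ) (hq : ‖q‖ < 1) (hq0 : q ≠ 0)
    (N : ℕ) (β : ℕ → ℂ) (K : ℕ → ℂ)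
    (h1 : (1 : ℂ) - a ≠ 0) (h2 : (1 : ℂ) - b ≠ 0)
    (h3 : ∀ k : ℕ, qp q q k ≠ 0)
    (h4 : ∀ k : ℕ, qp q (a * q ^ (N + 1)) k ≠ 0)
    (h5 : ∀ j : ℕ, qp q (b * q ^ (N + 1)) j ≠ 0)
    (h6 : ∀ j : ℕ, qp q b (2 * j) ≠ 0)
    (h7 : ∀ j k : ℕ, qp q (b * q ^ (1 + 2 * j)) k ≠ 0)
    (h8 : ∀ k : ℕ, qp q (a * q) k ≠ 0) :
    K N * ∑ j ∈ range (N + 1),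
        ((1 - b * q ^ (2 * j)) * qp q ((q ^ N)⁻¹) j
            / ((1 - b) * qp q (b * q ^ (N + 1)) j)) * q ^ (N * j) * β j
    = ∑ k ∈ range (N + 1),
        ((1 - a * q ^ (2 * k)) * qp q ((q ^ N)⁻¹) k * qp q a k
            / ((1 - a) * qp q q k * qp q (a * q ^ (N + 1)) k)) * q ^ (N * k) *
        ∑ j ∈ range (k + 1),
          (qp q ((q ^ k)⁻¹) j * qp q (a * q ^ k) j * qp q (b * q) j
              / qp q b (2 * j)) *
          (-1 : ℂ) ^ j * q ^ (j * (j + 1) / 2) * β j *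
          ∑ m ∈ range (k - j + 1),
            (qp q (q ^ j * (q ^ k)⁻¹) m * qp q (a * q ^ (j + k)) m
                * qp q (b * q ^ (j + 1)) m
              / (qp q q m * qp q (b * q ^ (1 + 2 * j)) m * qp q (a * q) (j + m))) *
            q ^ m * K (j + m) :=
  stmt_6_general q a b hq0 N β K h1 h2 h3 h4 h5 h6 h7 h8
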